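/- arXiv:1511.06640 — 2 statements merged into one kernel-verified Lean document; each statement's English description precedes it below -/
import Mathlib

section
/- Let (S,T) be a pair of random variables on {0,...,m} × {0,...,n}, and let 1 ≤ s,k ≤ m and 1 ≤ t,l ≤ n. Then P(S ≥ s, T ≥ t) ≤ E[(C(m,k) − C(m−S,k))(C(n,l) − C(n−T,l))] / ((C(m,k) − C(m−s,k))(C(n,l) − C(n−t,l))). (Gumbel-type upper bound) -/
open MeasureTheory

/-!
On the event `{s ≤ S, t ≤ T}` the integrand is at least its value at `(s, t)`, because
`x ↦ C(m,k) - C(m-x,k)` is monotone; it is also nonnegative, so this is Markov's inequality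
applied to the product of two monotone transforms of `S` and `T`.
-/

theorem Nat.choose_lt_choose_of_lt {a b k : ℕ} (hab : a < b) (hk : k ≠ 0) (hkb : k ≤ b) :
    a.choose k < b.choose k := by
  obtain ⟨b, rfl⟩ : ∃ b', b = b' + 1 := ⟨b - 1, by omega⟩
  obtain ⟨k, rfl⟩ : ∃ k', k = k' + 1 := ⟨k - 1, by omega⟩
  calc a.choose (k + 1) ≤ b.choose (k + 1) := Nat.choose_le_choose _ (by omega)
    _ < b.choose k + b.choose (k + 1) := Nat.lt_add_of_pos_left (Nat.choose_pos (by omega))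
    _ = (b + 1).choose (k + 1) := (Nat.choose_succ_succ b k).symm

/-- The number of `k`-subsets of an `m`-set that meet a fixed `x`-subset. -/
def chooseGap (m k x : ℕ) : ℝ := m.choose k - (m - x).choose k

namespace chooseGap

variable {m k : ℕ}

theorem monotone : Monotone (chooseGap m k) := fun x y hxy => by
  unfold chooseGap
  gcongr

theorem nonneg (x : ℕ) : 0 ≤ chooseGap m k x := by
  simpa [chooseGap] using monotone (m := m) (k := k) (Nat.zero_le x)

theorem le_choose (x : ℕ) : chooseGap m k x ≤ m.choose k := by
  unfold chooseGap
  linarith [(Nat.cast_nonneg ((m - x).choose k) : (0 : ℝ) ≤ _)]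

theorem pos {s : ℕ} (hs : s ≠ 0) (hk : k ≠ 0) (hkm : k ≤ m) : 0 < chooseGap m k s := by
  unfold chooseGap
  exact sub_pos.mpr (mod_cast Nat.choose_lt_choose_of_lt (by omega) hk hkm)

end chooseGap

section Markov

variable {Ω : Type*} [MeasurableSpace Ω] {μ : Measure Ω} [IsFiniteMeasure μ]

theorem measureReal_le_integral_div_of_le_on {f : Ω → ℝ} (hf : 0 ≤ᵐ[μ] f)
    (hfi : Integrable f μ) {A : Set Ω} {c : ℝ} (hc : 0 < c) (hA : ∀ ω ∈ A, c ≤ f ω) :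
    μ.real A ≤ (∫ ω, f ω ∂μ) / c := by
  rw [le_div_iff₀ hc, mul_comm]
  calc c * μ.real A ≤ c * μ.real {ω | c ≤ f ω} :=
      mul_le_mul_of_nonneg_left (measureReal_mono hA) hc.le
    _ ≤ ∫ ω, f ω ∂μ := mul_meas_ge_le_integral_of_nonneg hf hfi c

theorem measureReal_setOf_le_and_le_le_integral_mul_div {X Y : Ω → ℕ} (hX : Measurable X)
    (hY : Measurable Y) {g h : ℕ → ℝ} (hg : Monotone g) (hh : Monotone h)
    (hg0 : ∀ x, 0 ≤ g x) (hh0 : ∀ y, 0 ≤ h y) {Cg Ch : ℝ} (hgC : ∀ x, g x ≤ Cg)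
    (hhC : ∀ y, h y ≤ Ch) {s t : ℕ} (hs : 0 < g s) (ht : 0 < h t) :
    μ.real {ω | s ≤ X ω ∧ t ≤ Y ω} ≤ (∫ ω, g (X ω) * h (Y ω) ∂μ) / (g s * h t) := by
  have hmeas : Measurable fun ω => g (X ω) * h (Y ω) :=
    (measurable_from_nat.comp hX).mul (measurable_from_nat.comp hY)
  have hint : Integrable (fun ω => g (X ω) * h (Y ω)) μ := by
    refine .of_bound hmeas.aestronglyMeasurable (Cg * Ch) (.of_forall fun ω => ?_)
    rw [Real.norm_of_nonneg (mul_nonneg (hg0 _) (hh0 _))]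
    exact mul_le_mul (hgC _) (hhC _) (hh0 _) ((hg0 _).trans (hgC 0))
  refine measureReal_le_integral_div_of_le_on (.of_forall fun ω => mul_nonneg (hg0 _) (hh0 _))
    hint (mul_pos hs ht) fun ω ⟨hsX, htY⟩ => ?_
  exact mul_le_mul (hg hsX) (hh htY) ht.le (hg0 _)

end Markov

theorem bivariate_gumbel_type_upper_bound_general
    {Ω : Type*} [MeasurableSpace Ω] (μ : Measure Ω) [IsProbabilityMeasure μ]
    (m n : ℕ) (S T : Ω → ℕ) (hS : Measurable S) (hT : Measurable T)
    (s t k l : ℕ) (hs1 : 1 ≤ s) (hk1 : 1 ≤ k) (hkm : k ≤ m)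
    (ht1 : 1 ≤ t) (hl1 : 1 ≤ l) (hln : l ≤ n) :
    (μ {ω | s ≤ S ω ∧ t ≤ T ω}).toReal ≤
      (∫ ω, ((m.choose k : ℝ) - ((m - S ω).choose k)) *
          ((n.choose l : ℝ) - ((n - T ω).choose l)) ∂μ) /
        (((m.choose k : ℝ) - ((m - s).choose k)) *
          ((n.choose l : ℝ) - ((n - t).choose l))) :=
  measureReal_setOf_le_and_le_le_integral_mul_div hS hT chooseGap.monotone chooseGap.monotone
    chooseGap.nonneg chooseGap.nonneg chooseGap.le_choose chooseGap.le_choose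
    (chooseGap.pos (by omega) (by omega) hkm) (chooseGap.pos (by omega) (by omega) hln)

theorem bivariate_gumbel_type_upper_bound
    {Ω : Type*} [MeasurableSpace Ω] (μ : Measure Ω) [IsProbabilityMeasure μ]
    (m n : ℕ) (S T : Ω → ℕ) (hS : Measurable S) (hT : Measurable T)
    (hSm : ∀ᵐ ω ∂μ, S ω ≤ m) (hTn : ∀ᵐ ω ∂μ, T ω ≤ n)
    (s t k l : ℕ) (hs1 : 1 ≤ s) (hsm : s ≤ m) (hk1 : 1 ≤ k) (hkm : k ≤ m)
    (ht1 : 1 ≤ t) (htn : t ≤ n) (hl1 : 1 ≤ l) (hln : l ≤ n) :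
    (μ {ω | s ≤ S ω ∧ t ≤ T ω}).toReal ≤
      (∫ ω, ((m.choose k : ℝ) - ((m - S ω).choose k)) *
          ((n.choose l : ℝ) - ((n - T ω).choose l)) ∂μ) /
        (((m.choose k : ℝ) - ((m - s).choose k)) *
          ((n.choose l : ℝ) - ((n - t).choose l))) :=
  bivariate_gumbel_type_upper_bound_general μ m n S T hS hT s t k l hs1 hk1 hkm ht1 hl1 hln
end

section
/- Let (S,T) be a pair of random variables on {0,...,m} × {0,...,n} with binomial moments S_{i,j} = E[C(S,i) C(T,j)]. For 1 ≤ s ≤ k ≤ m and 1 ≤ t ≤ l ≤ n define A^{(s,t)}_{k,l} = [∑_{i=s}^{k} ∑_{j=t}^{l} (−1)^{i+j−s−t} C(i−1,i−s) C(m−i,k−i) C(j−1,j−t) C(n−j,l−j) S_{i,j}] / (C(m−s,k−s) C(n−t,l−t)). Then for fixed (s,t,l), A^{(s,t)}_{k,l} − A^{(s,t)}_{k+1,l} = (s/(m−s)) A^{(s+1,t)}_{k+1,l} for s ≤ k ≤ m−1 with s < m, and consequently A^{(s,t)}_{k,l} is non-increasing and convex in k. (Monotonicity and convexity of Chung-type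 bounds) -/
open MeasureTheory Finset

/-!
Write `a_{s,k}(x) = ∑_{i=s}^{k} (-1)^{i-s} C(i-1,i-s) C(m-i,k-i) C(x,i) / C(m-s,k-s)`, so that
`A^{(s,t)}_{k,l} = E[a_{s,k}(S) b_{t,l}(T)]` with `b` the analogous function for `T`
(`chungBound_eq`). The recurrence `a_{s,k} - a_{s,k+1} = s/(m-s) a_{s+1,k+1}` holds coefficient by
coefficient, i.e. for any sequence in place of `C(x,i)`. For `x ≤ m` the inversion formula
`∑_{i=s}^{x} (-1)^{i-s} C(i-1,i-s) C(x,i) = 1` gives `a_{s,m}(x) = [s ≤ x]`, and downward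
induction on `k` through the recurrence shows `a_{s,k}(x) ≥ 0`. Hence `A ≥ 0`: the recurrence then gives
monotonicity in `k`, and, applied again to the monotone sequence `A^{(s+1,t)}`, convexity.
-/

theorem sum_Icc_neg_one_pow_mul_choose_mul_choose {R : Type*} [CommRing R] {r u : ℕ}
    (h : r < u) : ∑ j ∈ Icc r u, (-1 : R) ^ (j - r) * (j.choose r) * (u.choose j) = 0 := by
  have hfactor : ∀ j ∈ Icc r u, (-1 : R) ^ (j - r) * (j.choose r) * (u.choose j) =
      (u.choose r : R) * ((-1) ^ (j - r) * ((u - r).choose (j - r))) := by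
    intro j hj
    rw [mem_Icc] at hj
    rw [mul_assoc, ← Nat.cast_mul, mul_comm (j.choose r), Nat.choose_mul hj.1, Nat.cast_mul]
    ring
  have hrow : ∑ d ∈ range (u - r + 1), (-1 : R) ^ d * ((u - r).choose d) = 0 := by
    have := congrArg (Int.cast : ℤ → R)
      (Int.alternating_sum_range_choose_of_ne (n := u - r) (by omega))
    push_cast at this
    exact this
  rw [sum_congr rfl hfactor, ← mul_sum, ← Ico_add_one_right_eq_Icc, sum_Ico_eq_sum_range,
    show u + 1 - r = u - r + 1 by omega]
  simp [hrow]

theorem sum_Icc_neg_one_pow_mul_choose_pred_mul_choose {R : Type*} [CommRing R] {s u : ℕ}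
    (hs : 1 ≤ s) (hsu : s ≤ u) :
    ∑ i ∈ Icc s u, (-1 : R) ^ (i - s) * ((i - 1).choose (i - s)) * (u.choose i) = 1 := by
  obtain ⟨r, rfl⟩ : ∃ r, s = r + 1 := ⟨s - 1, by omega⟩
  induction u, hsu using Nat.le_induction with
  | base => simp
  | succ u hu ih =>
    have hpascal : ∀ i ∈ Icc (r + 1) (u + 1),
        (-1 : R) ^ (i - (r + 1)) * ((i - 1).choose (i - (r + 1))) * ((u + 1).choose i) =
          (-1 : R) ^ (i - (r + 1)) * ((i - 1).choose (i - (r + 1))) * (u.choose (i - 1)) +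
          (-1 : R) ^ (i - (r + 1)) * ((i - 1).choose (i - (r + 1))) * (u.choose i) := by
      intro i hi
      obtain ⟨j, rfl⟩ : ∃ j, i = j + 1 := ⟨i - 1, by simp at hi; omega⟩
      rw [Nat.choose_succ_succ', Nat.add_sub_cancel]
      push_cast
      ring
    have hshift : ∑ i ∈ Icc (r + 1) (u + 1),
        (-1 : R) ^ (i - (r + 1)) * ((i - 1).choose (i - (r + 1))) * (u.choose (i - 1)) = 0 := by
      rw [← map_add_right_Icc, sum_map, ← sum_Icc_neg_one_pow_mul_choose_mul_choose (R := R)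
        (show r < u by omega)]
      refine sum_congr rfl fun j hj => ?_
      rw [mem_Icc] at hj
      simp [Nat.choose_symm hj.1]
    have htop : ∑ i ∈ Icc (r + 1) (u + 1),
        (-1 : R) ^ (i - (r + 1)) * ((i - 1).choose (i - (r + 1))) * (u.choose i) = 1 := by
      rw [sum_Icc_succ_top (by omega), Nat.choose_succ_self, Nat.cast_zero, mul_zero, add_zero, ih]
    rw [sum_congr rfl hpascal, sum_add_distrib, hshift, htop, zero_add]

noncomputable def chungWeight (m s k i : ℕ) : ℝ :=
  (-1) ^ (i - s) * ((i - 1).choose (i - s)) * ((m - i).choose (k - i)) / ((m - s).choose (k - s))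

noncomputable def chungSum (m s k : ℕ) (R : ℕ → ℝ) : ℝ := ∑ i ∈ Icc s k, chungWeight m s k i * R i

theorem chungWeight_self {m s k : ℕ} (hsk : s ≤ k) (hkm : k ≤ m) : chungWeight m s k s = 1 := by
  have : ((m - s).choose (k - s) : ℝ) ≠ 0 := by exact_mod_cast (Nat.choose_pos (by omega)).ne'
  simp [chungWeight, this]

theorem chungWeight_sub_succ {m s k i : ℕ} (hs : 1 ≤ s) (hsi : s < i) (hik : i ≤ k) (hkm : k < m) :
    chungWeight m s k i - chungWeight m s (k + 1) i =
      s / (m - s) * chungWeight m (s + 1) (k + 1) i := by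
  have hp := Nat.choose_succ_right_eq (i - 1) (s - 1)
  have hq := Nat.choose_succ_right_eq (m - i) (k - i)
  have ha := Nat.choose_succ_right_eq (m - s) (k - s)
  have hb := Nat.add_one_mul_choose_eq (m - s - 1) (k - s)
  -- eliminating these four binomial ratios leaves an identity of rational functions
  rw [Nat.sub_add_cancel hs, Nat.sub_sub_sub_cancel_right hs] at hp
  rw [show k - i + 1 = k + 1 - i by omega, show m - i - (k - i) = m - k by omega] at hq
  rw [show k - s + 1 = k + 1 - s by omega, show m - s - (k - s) = m - k by omega] at ha
  rw [show m - s - 1 + 1 = m - s by omega, show k - s + 1 = k + 1 - s by omega] at hb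
  simp only [chungWeight]
  rw [Nat.choose_symm_of_eq_add (show i - 1 = (i - s) + (s - 1) by omega),
    Nat.choose_symm_of_eq_add (show i - 1 = (i - (s + 1)) + s by omega),
    show m - (s + 1) = m - s - 1 by omega, show k + 1 - (s + 1) = k - s by omega,
    show i - s = i - (s + 1) + 1 by omega, pow_succ]
  replace hp := congrArg (Nat.cast : ℕ → ℝ) hp
  replace hq := congrArg (Nat.cast : ℕ → ℝ) hq
  replace ha := congrArg (Nat.cast : ℕ → ℝ) ha
  replace hb := congrArg (Nat.cast : ℕ → ℝ) hb
  push_cast [show s ≤ i by omega, show i ≤ k + 1 by omega, show k ≤ m by omega,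
    show s ≤ k + 1 by omega, show s ≤ m by omega] at hp hq ha hb
  have hs0 : (s : ℝ) ≠ 0 := Nat.cast_ne_zero.2 (by omega)
  have hms : (m : ℝ) - s ≠ 0 := sub_ne_zero.2 (by exact_mod_cast (show m ≠ s by omega))
  have hki : (k : ℝ) + 1 - i ≠ 0 := sub_ne_zero.2 (by exact_mod_cast (show k + 1 ≠ i by omega))
  have hks : (k : ℝ) + 1 - s ≠ 0 := sub_ne_zero.2 (by exact_mod_cast (show k + 1 ≠ s by omega))
  have hmk : (m : ℝ) - k ≠ 0 := sub_ne_zero.2 (by exact_mod_cast hkm.ne')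
  rw [mul_comm] at hb
  rw [eq_div_of_mul_eq hs0 hp, eq_div_of_mul_eq hki hq, eq_div_of_mul_eq hms hb,
    eq_div_of_mul_eq hks ha]
  field_simp
  ring

theorem neg_chungWeight_succ_self {m s k : ℕ} (hs : 1 ≤ s) (hsk : s ≤ k) (hkm : k < m) :
    -chungWeight m s (k + 1) (k + 1) = s / (m - s) * chungWeight m (s + 1) (k + 1) (k + 1) := by
  have hp := Nat.choose_succ_right_eq k (s - 1)
  have hb := Nat.add_one_mul_choose_eq (m - s - 1) (k - s)
  rw [Nat.sub_add_cancel hs, show k - (s - 1) = k + 1 - s by omega] at hp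
  rw [show m - s - 1 + 1 = m - s by omega, show k - s + 1 = k + 1 - s by omega] at hb
  simp only [chungWeight]
  rw [Nat.choose_symm_of_eq_add (show k + 1 - 1 = (k + 1 - s) + (s - 1) by omega),
    Nat.choose_symm_of_eq_add (show k + 1 - 1 = (k + 1 - (s + 1)) + s by omega),
    show m - (s + 1) = m - s - 1 by omega, show k + 1 - (s + 1) = k - s by omega,
    show k + 1 - 1 = k by omega, Nat.sub_self, Nat.choose_zero_right,
    show (-1 : ℝ) ^ (k + 1 - s) = (-1) ^ (k - s) * (-1) by rw [← pow_succ]; congr 1; omega]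
  replace hp := congrArg (Nat.cast : ℕ → ℝ) hp
  replace hb := congrArg (Nat.cast : ℕ → ℝ) hb
  push_cast [show s ≤ k + 1 by omega, show s ≤ m by omega] at hp hb
  have hs0 : (s : ℝ) ≠ 0 := Nat.cast_ne_zero.2 (by omega)
  have hms : (m : ℝ) - s ≠ 0 := sub_ne_zero.2 (by exact_mod_cast (show m ≠ s by omega))
  have hks : (k : ℝ) + 1 - s ≠ 0 := sub_ne_zero.2 (by exact_mod_cast (show k + 1 ≠ s by omega))
  rw [mul_comm] at hb
  rw [eq_div_of_mul_eq hs0 hp, eq_div_of_mul_eq hms hb]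
  field_simp

theorem chungSum_sub_succ {m s k : ℕ} (hs : 1 ≤ s) (hsk : s ≤ k) (hkm : k < m) (R : ℕ → ℝ) :
    chungSum m s k R - chungSum m s (k + 1) R = s / (m - s) * chungSum m (s + 1) (k + 1) R := by
  have hinterior : ∑ i ∈ Ioc s k, (chungWeight m s k i - chungWeight m s (k + 1) i) * R i =
      s / (m - s) * ∑ i ∈ Icc (s + 1) k, chungWeight m (s + 1) (k + 1) i * R i := by
    rw [mul_sum, ← Icc_add_one_left_eq_Ioc]
    refine sum_congr rfl fun i hi => ?_
    rw [mem_Icc] at hi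
    rw [chungWeight_sub_succ hs (by omega) hi.2 hkm, mul_assoc]
  simp only [sub_mul, sum_sub_distrib] at hinterior
  simp only [chungSum]
  rw [sum_Icc_succ_top (by omega), sum_Icc_succ_top (by omega), Icc_eq_cons_Ioc hsk, sum_cons,
    sum_cons, chungWeight_self hsk hkm.le, chungWeight_self (by omega) hkm]
  linear_combination hinterior + R (k + 1) * neg_chungWeight_succ_self hs hsk hkm

theorem chungSum_top_choose {m s x : ℕ} (hs : 1 ≤ s) (hxm : x ≤ m) :
    chungSum m s m (fun i => (x.choose i : ℝ)) = if s ≤ x then 1 else 0 := by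
  have hweight : ∀ i ∈ Icc s m, chungWeight m s m i * (x.choose i : ℝ) =
      (-1) ^ (i - s) * ((i - 1).choose (i - s)) * (x.choose i) := by
    intro i _
    simp [chungWeight]
  rw [chungSum, sum_congr rfl hweight]
  split_ifs with hsx
  · rw [← sum_subset (Icc_subset_Icc_right hxm),
      sum_Icc_neg_one_pow_mul_choose_pred_mul_choose hs hsx]
    intro i hi hix
    simp only [mem_Icc, not_and, not_le] at hi hix
    simp [Nat.choose_eq_zero_of_lt (hix hi.1)]
  · refine sum_eq_zero fun i hi => ?_
    simp only [mem_Icc] at hi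
    simp [Nat.choose_eq_zero_of_lt (show x < i by omega)]

theorem chungSum_choose_nonneg {m s k x : ℕ} (hs : 1 ≤ s) (hsk : s ≤ k) (hkm : k ≤ m)
    (hxm : x ≤ m) : 0 ≤ chungSum m s k (fun i => (x.choose i : ℝ)) := by
  induction hd : m - k generalizing s k with
  | zero =>
    obtain rfl : k = m := by omega
    rw [chungSum_top_choose hs hxm]
    split_ifs <;> norm_num
  | succ d ih =>
    have hrec := chungSum_sub_succ hs hsk (show k < m by omega) (fun i => (x.choose i : ℝ))
    have h1 := ih hs (show s ≤ k + 1 by omega) (show k + 1 ≤ m by omega) (by omega)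
    have h2 := ih (show 1 ≤ s + 1 by omega) (show s + 1 ≤ k + 1 by omega)
      (show k + 1 ≤ m by omega) (by omega)
    have hc : 0 ≤ (s : ℝ) / (m - s) :=
      div_nonneg (Nat.cast_nonneg _) (sub_nonneg.2 (by exact_mod_cast (show s ≤ m by omega)))
    linarith [mul_nonneg hc h2]

theorem integrable_comp_of_ae_le {Ω : Type*} [MeasurableSpace Ω] {μ : Measure Ω}
    [IsFiniteMeasure μ] {S T : Ω → ℕ} {m n : ℕ} (hS : Measurable S) (hT : Measurable T)
    (hSm : ∀ᵐ ω ∂μ, S ω ≤ m) (hTn : ∀ᵐ ω ∂μ, T ω ≤ n) (F : ℕ → ℕ → ℝ) :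
    Integrable (fun ω => F (S ω) (T ω)) μ := by
  refine Integrable.of_bound
    ((measurable_of_countable (Function.uncurry F)).comp (hS.prodMk hT)).aestronglyMeasurable
    (∑ a ∈ range (m + 1), ∑ b ∈ range (n + 1), ‖F a b‖) ?_
  filter_upwards [hSm, hTn] with ω hSω hTω
  calc ‖F (S ω) (T ω)‖ ≤ ∑ b ∈ range (n + 1), ‖F (S ω) b‖ :=
        single_le_sum (fun _ _ => norm_nonneg _) (mem_range.2 (Nat.lt_succ_of_le hTω))
    _ ≤ _ := single_le_sum (f := fun a => ∑ b ∈ range (n + 1), ‖F a b‖)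
        (fun _ _ => sum_nonneg fun _ _ => norm_nonneg _) (mem_range.2 (Nat.lt_succ_of_le hSω))

theorem integral_sum_mul_sum {Ω ι κ : Type*} [MeasurableSpace Ω] {μ : Measure Ω} (I : Finset ι)
    (J : Finset κ) (a : ι → ℝ) (b : κ → ℝ) (f : ι → Ω → ℝ) (g : κ → Ω → ℝ)
    (hfg : ∀ i j, Integrable (fun ω => f i ω * g j ω) μ) :
    ∫ ω, (∑ i ∈ I, a i * f i ω) * (∑ j ∈ J, b j * g j ω) ∂μ =
      ∑ i ∈ I, ∑ j ∈ J, a i * b j * ∫ ω, f i ω * g j ω ∂μ := by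
  have hterm : ∀ i j, Integrable (fun ω => a i * b j * (f i ω * g j ω)) μ :=
    fun i j => (hfg i j).const_mul _
  calc ∫ ω, (∑ i ∈ I, a i * f i ω) * (∑ j ∈ J, b j * g j ω) ∂μ
      = ∫ ω, ∑ i ∈ I, ∑ j ∈ J, a i * b j * (f i ω * g j ω) ∂μ := by
        congr 1 with ω
        rw [sum_mul_sum]
        exact sum_congr rfl fun i _ => sum_congr rfl fun j _ => by ring
    _ = _ := by
        rw [integral_finsetSum _ fun i _ => integrable_finsetSum _ fun j _ => hterm i j]
        refine sum_congr rfl fun i _ => ?_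
        rw [integral_finsetSum _ fun j _ => hterm i j]
        exact sum_congr rfl fun j _ => integral_const_mul _ _

section ChungBound

variable {Ω : Type*} [MeasurableSpace Ω] (μ : Measure Ω) (m n : ℕ) (S T : Ω → ℕ)

noncomputable def chungBound (s t k l : ℕ) : ℝ :=
  ∫ ω, chungSum m s k (fun i => ((S ω).choose i : ℝ)) *
    chungSum n t l (fun j => ((T ω).choose j : ℝ)) ∂μ

variable {μ m n S T}

theorem chungBound_eq [IsFiniteMeasure μ] (hS : Measurable S) (hT : Measurable T)
    (hSm : ∀ᵐ ω ∂μ, S ω ≤ m) (hTn : ∀ᵐ ω ∂μ, T ω ≤ n) (s t k l : ℕ) :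
    chungBound μ m n S T s t k l =
      (∑ i ∈ Icc s k, ∑ j ∈ Icc t l,
          (-1 : ℝ) ^ ((i - s) + (j - t)) * ((i - 1).choose (i - s)) *
            ((m - i).choose (k - i)) * ((j - 1).choose (j - t)) *
            ((n - j).choose (l - j)) *
            ∫ ω, (((S ω).choose i : ℝ) * ((T ω).choose j : ℝ)) ∂μ) /
        (((m - s).choose (k - s) : ℝ) * ((n - t).choose (l - t) : ℝ)) := by
  simp only [chungBound, chungSum]
  rw [integral_sum_mul_sum _ _ _ _ _ _ fun i j =>
    integrable_comp_of_ae_le hS hT hSm hTn fun a b => (a.choose i : ℝ) * (b.choose j : ℝ)]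
  rw [sum_div]
  refine sum_congr rfl fun i _ => ?_
  rw [sum_div]
  refine sum_congr rfl fun j _ => ?_
  rw [chungWeight, chungWeight, pow_add]
  ring

theorem chungBound_sub_succ [IsFiniteMeasure μ] (hS : Measurable S) (hT : Measurable T)
    (hSm : ∀ᵐ ω ∂μ, S ω ≤ m) (hTn : ∀ᵐ ω ∂μ, T ω ≤ n) {s t k l : ℕ} (hs : 1 ≤ s)
    (hsk : s ≤ k) (hkm : k < m) :
    chungBound μ m n S T s t k l - chungBound μ m n S T s t (k + 1) l =
      s / (m - s) * chungBound μ m n S T (s + 1) t (k + 1) l := by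
  have hint : ∀ σ κ, Integrable (fun ω => chungSum m σ κ (fun i => ((S ω).choose i : ℝ)) *
      chungSum n t l (fun j => ((T ω).choose j : ℝ))) μ := fun σ κ =>
    integrable_comp_of_ae_le hS hT hSm hTn fun a b =>
      chungSum m σ κ (fun i => (a.choose i : ℝ)) * chungSum n t l (fun j => (b.choose j : ℝ))
  rw [chungBound, chungBound, chungBound, ← integral_sub (hint _ _) (hint _ _),
    ← integral_const_mul]
  refine integral_congr_ae (ae_of_all _ fun ω => ?_)
  dsimp only
  rw [← sub_mul, chungSum_sub_succ hs hsk hkm, mul_assoc]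

theorem chungBound_nonneg (hSm : ∀ᵐ ω ∂μ, S ω ≤ m) (hTn : ∀ᵐ ω ∂μ, T ω ≤ n) {s t k l : ℕ}
    (hs : 1 ≤ s) (hsk : s ≤ k) (hkm : k ≤ m) (ht : 1 ≤ t) (htl : t ≤ l) (hln : l ≤ n) :
    0 ≤ chungBound μ m n S T s t k l := by
  refine integral_nonneg_of_ae ?_
  filter_upwards [hSm, hTn] with ω hSω hTω
  exact mul_nonneg (chungSum_choose_nonneg hs hsk hkm hSω) (chungSum_choose_nonneg ht htl hln hTω)

theorem chungBound_succ_le [IsFiniteMeasure μ] (hS : Measurable S) (hT : Measurable T)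
    (hSm : ∀ᵐ ω ∂μ, S ω ≤ m) (hTn : ∀ᵐ ω ∂μ, T ω ≤ n) {s t k l : ℕ} (hs : 1 ≤ s) (hsk : s ≤ k)
    (hkm : k < m) (ht : 1 ≤ t) (htl : t ≤ l) (hln : l ≤ n) :
    chungBound μ m n S T s t (k + 1) l ≤ chungBound μ m n S T s t k l := by
  have hrec := chungBound_sub_succ (t := t) (l := l) hS hT hSm hTn hs hsk hkm
  have hc : 0 ≤ (s : ℝ) / (m - s) :=
    div_nonneg (Nat.cast_nonneg _) (sub_nonneg.2 (by exact_mod_cast (show s ≤ m by omega)))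
  have hnext := chungBound_nonneg hSm hTn (show 1 ≤ s + 1 by omega) (show s + 1 ≤ k + 1 by omega)
    hkm ht htl hln
  linarith [mul_nonneg hc hnext]

theorem chungBound_sub_succ_le [IsFiniteMeasure μ] (hS : Measurable S) (hT : Measurable T)
    (hSm : ∀ᵐ ω ∂μ, S ω ≤ m) (hTn : ∀ᵐ ω ∂μ, T ω ≤ n) {s t k l : ℕ} (hs : 1 ≤ s) (hsk : s ≤ k)
    (hkm : k + 2 ≤ m) (ht : 1 ≤ t) (htl : t ≤ l) (hln : l ≤ n) :
    chungBound μ m n S T s t (k + 1) l - chungBound μ m n S T s t (k + 2) l ≤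
      chungBound μ m n S T s t k l - chungBound μ m n S T s t (k + 1) l := by
  rw [chungBound_sub_succ hS hT hSm hTn hs hsk (by omega),
    chungBound_sub_succ hS hT hSm hTn hs (by omega) (by omega)]
  have hc : 0 ≤ (s : ℝ) / (m - s) :=
    div_nonneg (Nat.cast_nonneg _) (sub_nonneg.2 (by exact_mod_cast (show s ≤ m by omega)))
  exact mul_le_mul_of_nonneg_left
    (chungBound_succ_le hS hT hSm hTn (by omega) (by omega) (by omega) ht htl hln) hc

end ChungBound

theorem chung_type_bound_monotone_convex_general
    {Ω : Type*} [MeasurableSpace Ω] (μ : Measure Ω) [IsProbabilityMeasure μ]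
    (m n : ℕ) (S T : Ω → ℕ) (hS : Measurable S) (hT : Measurable T)
    (hSm : ∀ᵐ ω ∂μ, S ω ≤ m) (hTn : ∀ᵐ ω ∂μ, T ω ≤ n)
    (t l : ℕ) (ht1 : 1 ≤ t) (htl : t ≤ l) (hln : l ≤ n)
    (A : ℕ → ℕ → ℝ)
    (hA : ∀ s k, A s k =
      (∑ i ∈ Finset.Icc s k, ∑ j ∈ Finset.Icc t l,
          (-1 : ℝ) ^ ((i - s) + (j - t)) * ((i - 1).choose (i - s)) *
            ((m - i).choose (k - i)) * ((j - 1).choose (j - t)) *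
            ((n - j).choose (l - j)) *
            ∫ ω, (((S ω).choose i : ℝ) * ((T ω).choose j : ℝ)) ∂μ) /
        (((m - s).choose (k - s) : ℝ) * ((n - t).choose (l - t) : ℝ)))
    (s : ℕ) (hs1 : 1 ≤ s) :
    (∀ k, s ≤ k → k ≤ m - 1 →
        A s k - A s (k + 1) = ((s : ℝ) / ((m : ℝ) - s)) * A (s + 1) (k + 1)) ∧
      (∀ k, s ≤ k → k ≤ m - 1 → A s (k + 1) ≤ A s k) ∧
      (∀ k, s ≤ k → k + 2 ≤ m → A s (k + 1) - A s (k + 2) ≤ A s k - A s (k + 1)) := by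
  have hA' : ∀ σ κ, A σ κ = chungBound μ m n S T σ t κ l := fun σ κ =>
    (hA σ κ).trans (chungBound_eq hS hT hSm hTn σ t κ l).symm
  simp only [hA']
  exact ⟨fun k hsk _ => chungBound_sub_succ hS hT hSm hTn hs1 hsk (by omega),
    fun k hsk _ => chungBound_succ_le hS hT hSm hTn hs1 hsk (by omega) ht1 htl hln,
    fun k hsk hkm => chungBound_sub_succ_le hS hT hSm hTn hs1 hsk hkm ht1 htl hln⟩

theorem chung_type_bound_monotone_convex
    {Ω : Type*} [MeasurableSpace Ω] (μ : Measure Ω) [IsProbabilityMeasure μ]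
    (m n : ℕ) (S T : Ω → ℕ) (hS : Measurable S) (hT : Measurable T)
    (hSm : ∀ᵐ ω ∂μ, S ω ≤ m) (hTn : ∀ᵐ ω ∂μ, T ω ≤ n)
    (t l : ℕ) (ht1 : 1 ≤ t) (htl : t ≤ l) (hln : l ≤ n)
    (A : ℕ → ℕ → ℝ)
    (hA : ∀ s k, A s k =
      (∑ i ∈ Finset.Icc s k, ∑ j ∈ Finset.Icc t l,
          (-1 : ℝ) ^ ((i - s) + (j - t)) * ((i - 1).choose (i - s)) *
            ((m - i).choose (k - i)) * ((j - 1).choose (j - t)) *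
            ((n - j).choose (l - j)) *
            ∫ ω, (((S ω).choose i : ℝ) * ((T ω).choose j : ℝ)) ∂μ) /
        (((m - s).choose (k - s) : ℝ) * ((n - t).choose (l - t) : ℝ)))
    (s : ℕ) (hs1 : 1 ≤ s) (hsm : s < m) :
    (∀ k, s ≤ k → k ≤ m - 1 →
        A s k - A s (k + 1) = ((s : ℝ) / ((m : ℝ) - s)) * A (s + 1) (k + 1)) ∧
      (∀ k, s ≤ k → k ≤ m - 1 → A s (k + 1) ≤ A s k) ∧
      (∀ k, s ≤ k → k + 2 ≤ m → A s (k + 1) - A s (k + 2) ≤ A s k - A s (k + 1)) :=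
  chung_type_bound_monotone_convex_general μ m n S T hS hT hSm hTn t l ht1 htl hln A hA s hs1
end
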